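/- arXiv:1909.06261 — 3 statements merged into one kernel-verified Lean document; each statement's English description precedes it below -/
import Mathlib

section
/- The symmetric tensor corresponding to the cubic form f = x_0^3 + ... + x_n^3 has exactly 2^{n+1} - 1 eigenpoints in P^n(C), namely the points whose coordinates are each 0 or 1 (not all zero), and they are all reduced (the defining quadrics meet transversally at each). -/
/-!
For `f = ∑ xᵢ³` the eigenpoint conditions read `3 xᵢ xⱼ (xⱼ - xᵢ) = 0`, so all nonzero
coordinates of an eigenpoint coincide, and rescaling by one of them gives a `0/1` vector.
At an eigenpair `(s, λ) = (s, 3)` the Jacobian of the quadrics `3 xᵢ² - λ xᵢ` restricted to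
the `x`-columns is diagonal with entries `6 sᵢ - 3 = ±3`, hence has full rank.
-/

open MvPolynomial

namespace MvPolynomial

variable {R σ : Type*}

theorem pderiv_sum_X_pow [CommSemiring R] [Fintype σ] [DecidableEq σ] (k : ℕ) (j : σ) :
    pderiv j (∑ i, X i ^ k : MvPolynomial σ R) = (k : MvPolynomial σ R) * X j ^ (k - 1) := by
  simp [pderiv_X, Pi.single_apply]

theorem eval_pderiv_three_mul_X_sq_sub_X_mul_X [CommRing R] [DecidableEq σ] {i k l : σ}
    (hkl : k ≠ l) (x : σ → R) :
    eval x (pderiv k (3 * X i ^ 2 - X l * X i : MvPolynomial σ R)) =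
      if k = i then 6 * x i - x l else 0 := by
  have h3 : pderiv k (3 : MvPolynomial σ R) = 0 := by
    rw [← map_ofNat C 3, pderiv_C]
  by_cases hki : k = i
  · subst hki
    norm_num [h3, pderiv_X, hkl, ← mul_assoc]
  · simp [h3, pderiv_X, hkl, hki]

end MvPolynomial

theorem forall_mul_sq_eq_iff_exists_smul_zero_one {ι K : Type*} [Field K] {p : ι → K}
    (hp : p ≠ 0) :
    (∀ i j, p i * p j ^ 2 = p j * p i ^ 2) ↔
      ∃ (c : K) (s : ι → K), c ≠ 0 ∧ (∀ i, s i = 0 ∨ s i = 1) ∧ s ≠ 0 ∧ p = c • s := by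
  constructor
  · intro h
    obtain ⟨i₀, hi₀ : p i₀ ≠ 0⟩ := Function.ne_iff.mp hp
    refine ⟨p i₀, (p i₀)⁻¹ • p, hi₀, fun i => ?_, smul_ne_zero (inv_ne_zero hi₀) hp,
      (smul_inv_smul₀ hi₀ p).symm⟩
    have : p i₀ * p i * (p i₀ - p i) = 0 := by linear_combination h i i₀
    rcases mul_eq_zero.mp this with h0 | h1
    · exact .inl (by simpa [hi₀] using h0)
    · exact .inr (by simp [← sub_eq_zero.mp h1, hi₀])
  · rintro ⟨c, s, -, hs, -, rfl⟩ i j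
    rcases hs i with hi | hi <;> rcases hs j with hj | hj <;> simp [hi, hj]

theorem ncard_setOf_zero_or_one_ne_zero {ι R : Type*} [Fintype ι] [Semiring R] [Nontrivial R] :
    {s : ι → R | (∀ i, s i = 0 ∨ s i = 1) ∧ s ≠ 0}.ncard = 2 ^ Fintype.card ι - 1 := by
  classical
  have hset : {s : ι → R | (∀ i, s i = 0 ∨ s i = 1) ∧ s ≠ 0} =
      ↑(Fintype.piFinset fun _ : ι => ({0, 1} : Finset R)) \ {0} := by
    ext s; simp
  rw [hset, Set.ncard_sdiff_singleton_of_mem (by simp), Set.ncard_coe_finset,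
    Fintype.card_piFinset, Finset.card_pair zero_ne_one, Finset.prod_const, Finset.card_univ]

theorem Matrix.rank_eq_card_height_of_submatrix_eq_diagonal {K m n : Type*} [Field K]
    [Fintype m] [DecidableEq m] [Fintype n] (M : Matrix m n K) (c : m → n) {d : m → K}
    (hM : M.submatrix id c = Matrix.diagonal d) (hd : ∀ i, d i ≠ 0) :
    M.rank = Fintype.card m := by
  classical
  refine le_antisymm M.rank_le_card_height ?_
  calc Fintype.card m = (Matrix.diagonal d).rank := by
        rw [Matrix.rank_diagonal, Fintype.card_subtype_compl, Fintype.card_subtype]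
        simp [hd]
    _ ≤ M.rank := hM ▸ M.rank_submatrix_le id c

/-- The symmetric tensor corresponding to `f = x_0^3 + ... + x_n^3` has exactly
`2^(n+1) - 1` eigenpoints in `ℙⁿ(ℂ)`, namely the points whose coordinates are each
`0` or `1` (not all zero), and they are all reduced: the defining quadrics
`3 x_i^2 - λ x_i` meet transversally (full-rank Jacobian) at each eigenpair. -/
theorem stmt_0 (n : ℕ)
    (f : MvPolynomial (Fin (n + 1)) ℂ) (hf : f = ∑ i, X i ^ 3) :
    (∀ p : Fin (n + 1) → ℂ, p ≠ 0 →
      ((∀ i j, p i * eval p (pderiv j f) - p j * eval p (pderiv i f) = 0) ↔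
        ∃ (c : ℂ) (s : Fin (n + 1) → ℂ), c ≠ 0 ∧ (∀ i, s i = 0 ∨ s i = 1) ∧ s ≠ 0 ∧
          p = c • s)) ∧
    {s : Fin (n + 1) → ℂ | (∀ i, s i = 0 ∨ s i = 1) ∧ s ≠ 0}.ncard = 2 ^ (n + 1) - 1 ∧
    (∀ s : Fin (n + 1) → ℂ, (∀ i, s i = 0 ∨ s i = 1) → s ≠ 0 →
      (Matrix.of (fun (i : Fin (n + 1)) (j : Fin (n + 2)) =>
        eval (Fin.snoc s (3 : ℂ))
          (pderiv j ((3 : MvPolynomial (Fin (n + 2)) ℂ) * X (Fin.castSucc i) ^ 2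
            - X (Fin.last (n + 1)) * X (Fin.castSucc i))))).rank = n + 1) := by
  subst hf
  refine ⟨fun p hp => ?_, ?_, fun s hs _ => ?_⟩
  · rw [← forall_mul_sq_eq_iff_exists_smul_zero_one hp]
    refine forall₂_congr fun i j => ?_
    simp only [pderiv_sum_X_pow, map_mul, map_pow, eval_X, map_ofNat, Nat.cast_ofNat]
    rw [← mul_left_comm 3, ← mul_left_comm 3, ← mul_sub, mul_eq_zero, sub_eq_zero,
      or_iff_right three_ne_zero]
  · simpa using ncard_setOf_zero_or_one_ne_zero (ι := Fin (n + 1)) (R := ℂ)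
  · have hd : ∀ i, 6 * s i - 3 ≠ 0 := fun i => by rcases hs i with h | h <;> norm_num [h]
    refine (Matrix.rank_eq_card_height_of_submatrix_eq_diagonal _ Fin.castSucc
      (d := fun i => 6 * s i - 3) (Matrix.ext fun i k => ?_) hd).trans (Fintype.card_fin _)
    rw [Matrix.submatrix_apply, Matrix.of_apply,
      eval_pderiv_three_mul_X_sq_sub_X_mul_X (Fin.castSucc_ne_last k)]
    simp [Matrix.diagonal_apply, eq_comm]
end

section
/- The cubic f = x_0^3 + x_1^3 + x_2^3 + x_3^3 has exactly 15 eigenpoints in P^3(C), namely the points whose coordinates are each 0 or 1 and not all zero, all of which are regular. -/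
/-!
The gradient of `∑ xᵢ³` at `p` is `(3 pᵢ²)ᵢ`, which vanishes only at `p = 0` since `3 ≠ 0` in `ℂ`.
So `p ≠ 0` is an eigenpoint iff `pᵢ² = λ pᵢ` for all `i`, i.e. every nonzero coordinate of `p`
equals the same `λ`, which says exactly that `p` is `λ` times a nonzero `0/1`-vector.
-/

open MvPolynomial

section Eigenpoints

variable {ι K : Type*}

theorem eval_pderiv_sum_X_pow_three {R : Type*} [CommRing R] [Fintype ι] (p : ι → R) (i : ι) :
    eval p (pderiv i (∑ j, X j ^ 3 : MvPolynomial ι R)) = 3 * p i ^ 2 := by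
  classical
  simp [pderiv_X, Pi.single_apply]

theorem exists_forall_mul_eq_mul_iff [Field K] {a : K} (ha : a ≠ 0) (x y : ι → K) :
    (∃ lam, ∀ i, a * x i = lam * y i) ↔ ∃ lam, ∀ i, x i = lam * y i := by
  constructor
  · rintro ⟨lam, h⟩
    exact ⟨lam / a, fun i => by field_simp; linear_combination h i⟩
  · rintro ⟨lam, h⟩
    exact ⟨a * lam, fun i => by rw [h i]; ring⟩

theorem exists_forall_sq_eq_mul_iff [CommRing K] [IsDomain K] {p : ι → K} (hp : p ≠ 0) :
    (∃ lam, ∀ i, p i ^ 2 = lam * p i) ↔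
      ∃ (c : K) (s : ι → K), c ≠ 0 ∧ (∀ i, s i = 0 ∨ s i = 1) ∧ s ≠ 0 ∧ p = c • s := by
  classical
  obtain ⟨i₀, hi₀⟩ : ∃ i, p i ≠ 0 := Function.ne_iff.mp hp
  constructor
  · rintro ⟨lam, hlam⟩
    have h_zero_or_eq (i : ι) : p i = 0 ∨ p i = lam := by
      simpa [sq, mul_eq_mul_right_iff, or_comm] using hlam i
    have hlam₀ : lam ≠ 0 := (h_zero_or_eq i₀).resolve_left hi₀ ▸ hi₀
    refine ⟨lam, fun i => if p i = 0 then 0 else 1, hlam₀,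
      fun i => by by_cases h : p i = 0 <;> simp [h],
      fun hs => by simpa [hi₀] using congrFun hs i₀, funext fun i => ?_⟩
    by_cases h : p i = 0
    · simp [h]
    · simpa [h] using (h_zero_or_eq i).resolve_left h
  · rintro ⟨c, s, -, hs, -, rfl⟩
    refine ⟨c, fun i => ?_⟩
    rcases hs i with h | h <;> simp [h, sq]

theorem ncard_setOf_zero_one_ne_zero [Fintype ι] [Zero K] [One K] [NeZero (1 : K)] :
    {s : ι → K | (∀ i, s i = 0 ∨ s i = 1) ∧ s ≠ 0}.ncard = 2 ^ Fintype.card ι - 1 := by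
  classical
  have : {s : ι → K | (∀ i, s i = 0 ∨ s i = 1) ∧ s ≠ 0}
      = ↑((Fintype.piFinset fun _ : ι => ({0, 1} : Finset K)).erase 0) := by
    ext s
    simp [and_comm]
  rw [this, Set.ncard_coe_finset, Finset.card_erase_of_mem (by simp)]
  simp [Fintype.card_piFinset]

end Eigenpoints

/-- The cubic `f = x_0^3 + x_1^3 + x_2^3 + x_3^3` has exactly 15 eigenpoints in
`ℙ³(ℂ)`, namely the points whose coordinates are each `0` or `1` and not all zero,
all of which are regular. -/
theorem stmt_10 (f : MvPolynomial (Fin 4) ℂ)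
    (hf : f = X 0 ^ 3 + X 1 ^ 3 + X 2 ^ 3 + X 3 ^ 3) :
    (∀ p : Fin 4 → ℂ, p ≠ 0 →
      (((∃ lam : ℂ, ∀ i, eval p (pderiv i f) = lam * p i) ↔
        ∃ (c : ℂ) (s : Fin 4 → ℂ), c ≠ 0 ∧ (∀ i, s i = 0 ∨ s i = 1) ∧ s ≠ 0 ∧
          p = c • s) ∧
       ((∃ lam : ℂ, ∀ i, eval p (pderiv i f) = lam * p i) →
        (fun i => eval p (pderiv i f)) ≠ 0))) ∧
    {s : Fin 4 → ℂ | (∀ i, s i = 0 ∨ s i = 1) ∧ s ≠ 0}.ncard = 15 := by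
  have hgrad (p : Fin 4 → ℂ) (i : Fin 4) : eval p (pderiv i f) = 3 * p i ^ 2 := by
    rw [hf, ← Fin.sum_univ_four (f := fun j => (X j : MvPolynomial (Fin 4) ℂ) ^ 3),
      eval_pderiv_sum_X_pow_three]
  refine ⟨fun p hp => ⟨?_, fun _ => ?_⟩, by simp [ncard_setOf_zero_one_ne_zero]⟩
  · simp only [hgrad, exists_forall_mul_eq_mul_iff (three_ne_zero : (3 : ℂ) ≠ 0),
      exists_forall_sq_eq_mul_iff hp]
  · obtain ⟨i, hi⟩ := Function.ne_iff.mp hp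
    exact Function.ne_iff.mpr ⟨i, by simpa [hgrad] using hi⟩
end

section
/- For the cubic f = x_0^2 (x_1 + i x_2) in C[x_0, x_1, x_2] (where i^2 = -1), every eigenpoint is irregular; i.e., any p ∈ P^2 such that ∇f(p) is proportional to p satisfies ∇f(p) = 0. In particular f has no regular eigenpoints. -/
/-!
With `g = x₁ + i x₂` we have `∇f = (2 x₀ g, x₀², i x₀²)`, and the last two entries satisfy
`∂₁f + i ∂₂f = 0`. So if `∇f(p) = λ p` then `λ g(p) = 0`; for `λ ≠ 0` this gives `g(p) = 0`,
hence `λ p₀ = 0`, hence `p₀ = 0`, and then `λ p₁ = λ p₂ = 0` forces `p = 0`.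
So every eigenpoint has eigenvalue `0`.
-/

open MvPolynomial Complex

lemma eval_pderiv_X_zero_sq_mul (p : Fin 3 → ℂ) (k : Fin 3) :
    eval p (pderiv k (X 0 ^ 2 * (X 1 + C I * X 2) : MvPolynomial (Fin 3) ℂ)) =
      ![2 * p 0 * (p 1 + I * p 2), p 0 ^ 2, I * p 0 ^ 2] k := by
  fin_cases k <;> simp [pderiv_X] <;> ring

lemma eq_zero_or_eq_zero_of_eigenvector (p : Fin 3 → ℂ) (lam : ℂ)
    (h : ∀ k, ![2 * p 0 * (p 1 + I * p 2), p 0 ^ 2, I * p 0 ^ 2] k = lam * p k) :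
    lam = 0 ∨ p = 0 := by
  have h0 : 2 * p 0 * (p 1 + I * p 2) = lam * p 0 := h 0
  have h1 : p 0 ^ 2 = lam * p 1 := h 1
  have h2 : I * p 0 ^ 2 = lam * p 2 := h 2
  refine or_iff_not_imp_left.2 fun hlam => ?_
  have hg : p 1 + I * p 2 = 0 := by
    refine (mul_eq_zero.1 ?_).resolve_left hlam
    linear_combination -h1 - I * h2 + p 0 ^ 2 * I_sq
  have hp0 : p 0 = 0 := by
    refine (mul_eq_zero.1 ?_).resolve_left hlam
    rw [← h0, hg, mul_zero]
  have hp1 : p 1 = 0 := by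
    refine (mul_eq_zero.1 ?_).resolve_left hlam
    rw [← h1, hp0, zero_pow two_ne_zero]
  have hp2 : p 2 = 0 := by
    refine (mul_eq_zero.1 ?_).resolve_left hlam
    rw [← h2, hp0, zero_pow two_ne_zero, mul_zero]
  ext i
  fin_cases i <;> assumption

/-- For the cubic `f = x_0^2 (x_1 + i x_2)`, every eigenpoint is irregular:
any `p ∈ ℙ²` with `∇f(p)` proportional to `p` satisfies `∇f(p) = 0`.
In particular `f` has no regular eigenpoints. -/
theorem stmt_11 (f : MvPolynomial (Fin 3) ℂ)
    (hf : f = X 0 ^ 2 * (X 1 + C Complex.I * X 2)) :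
    ∀ p : Fin 3 → ℂ, p ≠ 0 →
      (∃ lam : ℂ, ∀ k, eval p (pderiv k f) = lam * p k) →
      ∀ k, eval p (pderiv k f) = 0 := by
  rintro p hp ⟨lam, hlam⟩ k
  subst hf
  have hgrad : ∀ k, ![2 * p 0 * (p 1 + I * p 2), p 0 ^ 2, I * p 0 ^ 2] k = lam * p k :=
    fun k => by rw [← eval_pderiv_X_zero_sq_mul, hlam]
  obtain rfl : lam = 0 := (eq_zero_or_eq_zero_of_eigenvector p lam hgrad).resolve_right hp
  rw [hlam, zero_mul]
end
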